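/- (Integral form of the coupled Lane–Emden system.) Let $k_1,k_2\ge 0$ be real numbers with $k_1\ne 1$ and $k_2\ne 1$, let $a_1,a_2,b_1,b_2,c_1,c_2$ be reals with $a_1\ne0$, $a_2\ne0$, and let $f_1,f_2\colon[0,1]\times\mathbb{R}\times\mathbb{R}\to\mathbb{R}$ be continuous. Define $G_i(x,s)=\dfrac{\max(x,s)^{1-k_i}-1}{1-k_i}-\dfrac{b_i}{a_i}$ for $i=1,2$. Suppose $y_1,y_2\colon[0,1]\to\mathbb{R}$ are continuous and satisfy, for all $x\in[0,1]$, $y_i(x)=\dfrac{c_i}{a_i}+\int_0^1 G_i(x,s)\,s^{k_i}f_i\big(s,y_1(s),y_2(s)\big)\,ds$ ($i=1,2$). Then for $i=1,2$: $y_i$ is differentiable on $(0,1]$ with $y_i'(x)=x^{-k_i}\int_0^x s^{k_i}f_i(s,y_1(s),y_2(s))\,ds$; $\dfrac{d}{dx}\big(x^{k_i}y_i'(x)\big)=x^{k_i}f_i\big(x,y_1(x),y_2(x)\big)$ for all $x\in(0,1)$; $\lim_{x\to0^+}y_i'(x)=0$; and $a_i\,y_i(1)+b_i\,y_i'(1)=c_i$.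 -/

import Mathlib

open MeasureTheory Set Filter Topology

/-!
Write `u t = (t ^ (1 - k) - 1) / (1 - k)`, so that `u' t = t ^ (-k)` and `u 1 = 0`, and
`G x = ∫₀ˣ s ^ k φ s`. Splitting the integral at `s = x` turns the kernel `u (max x s)` into
`y x = c / a + (u x - b / a) G x + ∫ₓ¹ (u s - b / a) s ^ k φ s`.
Differentiating, the two terms `± (u x - b / a) x ^ k φ x` cancel and `y' x = x ^ (-k) G x`;
so `x ^ k y' x = G x` has derivative `x ^ k φ x`, the bound `|G x| ≤ M x ^ (k + 1)` gives
`y' x → 0` as `x → 0⁺`, and `u 1 = 0` gives the boundary condition at `1`.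
Each component of the system is the case `φ s = fᵢ s (y₁ s) (y₂ s)`.
-/

section FTC

variable {E : Type*} [NormedAddCommGroup E] [NormedSpace ℝ E] [CompleteSpace E]
  {f : ℝ → E} {a b x : ℝ}

theorem ContinuousOn.hasDerivWithinAt_integral_right (hf : ContinuousOn f (Icc a b))
    (hx : x ∈ Icc a b) : HasDerivWithinAt (fun t => ∫ s in a..t, f s) (f x) (Icc a b) x := by
  have : Fact (x ∈ Icc a b) := ⟨hx⟩
  exact intervalIntegral.integral_hasDerivWithinAt_right
    ((hf.mono (Icc_subset_Icc_right hx.2)).intervalIntegrable_of_Icc hx.1)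
    (hf.stronglyMeasurableAtFilter_nhdsWithin measurableSet_Icc x) (hf x hx)

theorem ContinuousOn.hasDerivWithinAt_integral_left (hf : ContinuousOn f (Icc a b))
    (hx : x ∈ Icc a b) : HasDerivWithinAt (fun t => ∫ s in t..b, f s) (-f x) (Icc a b) x := by
  have : Fact (x ∈ Icc a b) := ⟨hx⟩
  exact intervalIntegral.integral_hasDerivWithinAt_left
    ((hf.mono (Icc_subset_Icc_left hx.1)).intervalIntegrable_of_Icc hx.2)
    (hf.stronglyMeasurableAtFilter_nhdsWithin measurableSet_Icc x) (hf x hx)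

end FTC

theorem intervalIntegral.integral_comp_max_mul {F g : ℝ → ℝ} {a b x : ℝ} (hax : a ≤ x)
    (hxb : x ≤ b) (hg : IntervalIntegrable g volume a x)
    (hFg : IntervalIntegrable (fun s => F s * g s) volume x b) :
    ∫ s in a..b, F (max x s) * g s = F x * (∫ s in a..x, g s) + ∫ s in x..b, F s * g s := by
  have hleft : EqOn (fun s => F (max x s) * g s) (fun s => F x * g s) (uIcc a x) := by
    intro s hs
    rw [uIcc_of_le hax] at hs
    simp only [max_eq_left hs.2]
  have hright : EqOn (fun s => F (max x s) * g s) (fun s => F s * g s) (uIcc x b) := by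
    intro s hs
    rw [uIcc_of_le hxb] at hs
    simp only [max_eq_right hs.1]
  rw [← intervalIntegral.integral_add_adjacent_intervals
      ((hg.const_mul (F x)).congr (hleft.symm.mono uIoc_subset_uIcc))
      (hFg.congr (hright.symm.mono uIoc_subset_uIcc)),
    intervalIntegral.integral_congr hleft, intervalIntegral.integral_congr hright,
    intervalIntegral.integral_const_mul]

theorem Real.rpow_one_sub_mul_rpow {s : ℝ} (hs : 0 ≤ s) (k : ℝ) : s ^ (1 - k) * s ^ k = s := by
  rw [← Real.rpow_add' hs (by simp), sub_add_cancel, Real.rpow_one]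

theorem setIntegral_Icc_eq_intervalIntegral {f : ℝ → ℝ} {a b : ℝ} (hab : a ≤ b) :
    ∫ s in Icc a b, f s = ∫ s in a..b, f s := by
  rw [integral_Icc_eq_integral_Ioc, intervalIntegral.integral_of_le hab]

namespace LaneEmden

variable {k : ℝ} {φ : ℝ → ℝ}

theorem hasDerivAt_rpow_one_sub_sub_one_div (hk : k ≠ 1) {x : ℝ} (hx : x ≠ 0) :
    HasDerivAt (fun t => (t ^ (1 - k) - 1) / (1 - k)) (x ^ (-k)) x := by
  have h1k : (1:ℝ) - k ≠ 0 := sub_ne_zero.2 hk.symm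
  refine (((Real.hasDerivAt_rpow_const (p := 1 - k) (Or.inl hx)).sub_const 1).div_const
    (1 - k)).congr_deriv ?_
  rw [sub_sub_cancel_left]
  field_simp

-- `s ^ (1 - k)` is singular at `0` when `k > 1`; the factor `s ^ k` removes the singularity.
theorem continuousOn_rpow_one_sub_sub_one_div_sub_mul (hk : 0 ≤ k) (hφ : ContinuousOn φ (Icc 0 1))
    (β : ℝ) :
    ContinuousOn (fun s => ((s ^ (1 - k) - 1) / (1 - k) - β) * (s ^ k * φ s)) (Icc 0 1) := by
  have hpow := Real.continuous_rpow_const hk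
  have hcont : Continuous fun s : ℝ => (s - s ^ k) / (1 - k) - β * s ^ k :=
    ((continuous_id.sub hpow).div_const _).sub (continuous_const.mul hpow)
  refine (hcont.continuousOn.mul hφ).congr fun s hs => ?_
  simp only [Pi.mul_apply]
  linear_combination φ s / (1 - k) * Real.rpow_one_sub_mul_rpow hs.1 k

theorem continuousOn_rpow_mul (hk : 0 ≤ k) (hφ : ContinuousOn φ (Icc 0 1)) :
    ContinuousOn (fun s => s ^ k * φ s) (Icc 0 1) :=
  (Real.continuous_rpow_const hk).continuousOn.mul hφ

theorem eq_of_integral_eq (hk : 0 ≤ k) (hφ : ContinuousOn φ (Icc 0 1)) {y : ℝ → ℝ} {c β : ℝ}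
    (heq : ∀ x ∈ Icc (0:ℝ) 1, y x = c + ∫ s in Icc (0:ℝ) 1,
      (((max x s) ^ (1 - k) - 1) / (1 - k) - β) * s ^ k * φ s)
    {x : ℝ} (hx : x ∈ Icc (0:ℝ) 1) :
    y x = c + ((x ^ (1 - k) - 1) / (1 - k) - β) * (∫ s in 0..x, s ^ k * φ s)
      + ∫ s in x..1, ((s ^ (1 - k) - 1) / (1 - k) - β) * (s ^ k * φ s) := by
  rw [heq x hx, add_assoc, setIntegral_Icc_eq_intervalIntegral zero_le_one]
  simp only [mul_assoc]
  exact congrArg _ (intervalIntegral.integral_comp_max_mul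
    (F := fun t => (t ^ (1 - k) - 1) / (1 - k) - β) hx.1 hx.2
    (((continuousOn_rpow_mul hk hφ).mono (Icc_subset_Icc_right hx.2)).intervalIntegrable_of_Icc
      hx.1)
    (((continuousOn_rpow_one_sub_sub_one_div_sub_mul hk hφ β).mono
      (Icc_subset_Icc_left hx.1)).intervalIntegrable_of_Icc hx.2))

theorem hasDerivWithinAt_of_integral_eq (hk : 0 ≤ k) (hk1 : k ≠ 1) (hφ : ContinuousOn φ (Icc 0 1))
    {y : ℝ → ℝ} {c β : ℝ}
    (heq : ∀ x ∈ Icc (0:ℝ) 1, y x = c + ∫ s in Icc (0:ℝ) 1,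
      (((max x s) ^ (1 - k) - 1) / (1 - k) - β) * s ^ k * φ s)
    {x : ℝ} (hx : x ∈ Ioc (0:ℝ) 1) :
    HasDerivWithinAt y (x ^ (-k) * ∫ s in Icc (0:ℝ) x, s ^ k * φ s) (Icc (0:ℝ) 1) x := by
  have hx' : x ∈ Icc (0:ℝ) 1 := Ioc_subset_Icc_self hx
  have hu := ((hasDerivAt_rpow_one_sub_sub_one_div hk1 hx.1.ne').sub_const β).hasDerivWithinAt
    (s := Icc 0 1)
  have hG := (continuousOn_rpow_mul hk hφ).hasDerivWithinAt_integral_right hx'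
  have hH :=
    (continuousOn_rpow_one_sub_sub_one_div_sub_mul hk hφ β).hasDerivWithinAt_integral_left hx'
  have hR := ((hu.mul hG).const_add c).add hH
  rw [setIntegral_Icc_eq_intervalIntegral hx.1.le]
  exact (hR.congr (fun t ht => eq_of_integral_eq hk hφ heq ht)
    (eq_of_integral_eq hk hφ heq hx')).congr_deriv (by ring)

theorem hasDerivAt_rpow_mul_rpow_neg_mul_integral (hk : 0 ≤ k) (hφ : ContinuousOn φ (Icc 0 1))
    {x : ℝ} (hx : x ∈ Ioo (0:ℝ) 1) :
    HasDerivAt (fun t => t ^ k * (t ^ (-k) * ∫ s in Icc (0:ℝ) t, s ^ k * φ s)) (x ^ k * φ x) x := by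
  have hG := ((continuousOn_rpow_mul hk hφ).hasDerivWithinAt_integral_right
    (Ioo_subset_Icc_self hx)).hasDerivAt (Icc_mem_nhds hx.1 hx.2)
  refine hG.congr_of_eventuallyEq ?_
  filter_upwards [Ioi_mem_nhds hx.1] with t ht
  rw [← mul_assoc, ← Real.rpow_add ht, add_neg_cancel, Real.rpow_zero, one_mul,
    setIntegral_Icc_eq_intervalIntegral ht.le]

theorem tendsto_rpow_neg_mul_integral (hk : 0 ≤ k) (hφ : ContinuousOn φ (Icc 0 1)) :
    Tendsto (fun x => x ^ (-k) * ∫ s in Icc (0:ℝ) x, s ^ k * φ s) (𝓝[>] 0) (𝓝 0) := by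
  obtain ⟨M, hM⟩ := isCompact_Icc.exists_bound_of_continuousOn hφ
  have hbound : ∀ x ∈ Ioc (0:ℝ) 1, ‖x ^ (-k) * ∫ s in Icc (0:ℝ) x, s ^ k * φ s‖ ≤ M * x := by
    rintro x ⟨hx0, hx1⟩
    have hxk : 0 < x ^ k := Real.rpow_pos_of_pos hx0 k
    have hint : ‖∫ s in Icc (0:ℝ) x, s ^ k * φ s‖ ≤ x ^ k * M * x := by
      have := norm_setIntegral_le_of_norm_le_const (μ := volume) (C := x ^ k * M)
        (f := fun s => s ^ k * φ s) measure_Icc_lt_top fun s hs => by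
          rw [norm_mul, Real.norm_of_nonneg (Real.rpow_nonneg hs.1 k)]
          exact mul_le_mul (Real.rpow_le_rpow hs.1 hs.2 hk) (hM s ⟨hs.1, hs.2.trans hx1⟩)
            (norm_nonneg _) hxk.le
      simpa [hx0.le] using this
    calc ‖x ^ (-k) * ∫ s in Icc (0:ℝ) x, s ^ k * φ s‖
        = x ^ (-k) * ‖∫ s in Icc (0:ℝ) x, s ^ k * φ s‖ := by
          rw [norm_mul, Real.norm_of_nonneg (Real.rpow_nonneg hx0.le _)]
      _ ≤ x ^ (-k) * (x ^ k * M * x) := by gcongr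
      _ = M * x := by
          rw [Real.rpow_neg hx0.le]
          field_simp
  refine squeeze_zero_norm' (a := fun x => M * x) ?_ ?_
  · filter_upwards [Ioc_mem_nhdsGT one_pos] with x hx using hbound x hx
  · simpa using tendsto_nhdsWithin_of_tendsto_nhds ((continuous_const_mul M).tendsto 0)

theorem boundary_eq_of_integral_eq {a b c : ℝ} (ha : a ≠ 0) {y : ℝ → ℝ}
    (heq : y 1 = c / a + ∫ s in Icc (0:ℝ) 1,
      (((max 1 s) ^ (1 - k) - 1) / (1 - k) - b / a) * s ^ k * φ s) :
    a * y 1 + b * ((1:ℝ) ^ (-k) * ∫ s in Icc (0:ℝ) 1, s ^ k * φ s) = c := by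
  have hkernel : ∫ s in Icc (0:ℝ) 1, (((max 1 s) ^ (1 - k) - 1) / (1 - k) - b / a) * s ^ k * φ s
      = -(b / a) * ∫ s in Icc (0:ℝ) 1, s ^ k * φ s := by
    rw [← integral_const_mul]
    refine setIntegral_congr_fun measurableSet_Icc fun s hs => ?_
    simp only [max_eq_left hs.2, Real.one_rpow, sub_self, zero_div, zero_sub]
    ring
  rw [heq, hkernel, Real.one_rpow]
  field_simp
  ring

theorem of_integral_eq (hk : 0 ≤ k) (hk1 : k ≠ 1) (hφ : ContinuousOn φ (Icc 0 1))
    {a b c : ℝ} (ha : a ≠ 0) {y : ℝ → ℝ}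
    (heq : ∀ x ∈ Icc (0:ℝ) 1, y x = c / a + ∫ s in Icc (0:ℝ) 1,
      (((max x s) ^ (1 - k) - 1) / (1 - k) - b / a) * s ^ k * φ s) :
    let d : ℝ → ℝ := fun x => x ^ (-k) * ∫ s in Icc (0:ℝ) x, s ^ k * φ s
    (∀ x ∈ Ioc (0:ℝ) 1, HasDerivWithinAt y (d x) (Icc (0:ℝ) 1) x) ∧
    (∀ x ∈ Ioo (0:ℝ) 1, HasDerivAt (fun t => t ^ k * d t) (x ^ k * φ x) x) ∧
    Tendsto d (𝓝[>] 0) (𝓝 0) ∧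
    a * y 1 + b * d 1 = c :=
  ⟨fun _ => hasDerivWithinAt_of_integral_eq hk hk1 hφ heq,
    fun _ => hasDerivAt_rpow_mul_rpow_neg_mul_integral hk hφ,
    tendsto_rpow_neg_mul_integral hk hφ,
    boundary_eq_of_integral_eq ha (heq 1 (right_mem_Icc.2 zero_le_one))⟩

end LaneEmden

theorem stmt11 (k₁ k₂ a₁ a₂ b₁ b₂ c₁ c₂ : ℝ)
    (hk₁ : 0 ≤ k₁) (hk₂ : 0 ≤ k₂) (hk₁1 : k₁ ≠ 1) (hk₂1 : k₂ ≠ 1)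
    (ha₁ : a₁ ≠ 0) (ha₂ : a₂ ≠ 0)
    (f₁ f₂ : ℝ → ℝ → ℝ → ℝ)
    (hf₁c : ContinuousOn (fun q : ℝ × ℝ × ℝ => f₁ q.1 q.2.1 q.2.2)
      (Icc (0:ℝ) 1 ×ˢ (univ : Set (ℝ × ℝ))))
    (hf₂c : ContinuousOn (fun q : ℝ × ℝ × ℝ => f₂ q.1 q.2.1 q.2.2)
      (Icc (0:ℝ) 1 ×ˢ (univ : Set (ℝ × ℝ))))
    (y₁ y₂ : ℝ → ℝ)
    (hy₁c : ContinuousOn y₁ (Icc 0 1)) (hy₂c : ContinuousOn y₂ (Icc 0 1))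
    (heq₁ : ∀ x ∈ Icc (0:ℝ) 1, y₁ x = c₁ / a₁ + ∫ s in Icc (0:ℝ) 1,
      (((max x s) ^ (1 - k₁) - 1) / (1 - k₁) - b₁ / a₁) * s ^ k₁ * f₁ s (y₁ s) (y₂ s))
    (heq₂ : ∀ x ∈ Icc (0:ℝ) 1, y₂ x = c₂ / a₂ + ∫ s in Icc (0:ℝ) 1,
      (((max x s) ^ (1 - k₂) - 1) / (1 - k₂) - b₂ / a₂) * s ^ k₂ * f₂ s (y₁ s) (y₂ s)) :
    let d₁ : ℝ → ℝ := fun x => x ^ (-k₁) * ∫ s in Icc (0:ℝ) x, s ^ k₁ * f₁ s (y₁ s) (y₂ s)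
    let d₂ : ℝ → ℝ := fun x => x ^ (-k₂) * ∫ s in Icc (0:ℝ) x, s ^ k₂ * f₂ s (y₁ s) (y₂ s)
    ((∀ x ∈ Ioc (0:ℝ) 1, HasDerivWithinAt y₁ (d₁ x) (Icc (0:ℝ) 1) x) ∧
     (∀ x ∈ Ioo (0:ℝ) 1, HasDerivAt (fun t => t ^ k₁ * d₁ t) (x ^ k₁ * f₁ x (y₁ x) (y₂ x)) x) ∧
     Tendsto d₁ (nhdsWithin 0 (Ioi 0)) (nhds 0) ∧
     a₁ * y₁ 1 + b₁ * d₁ 1 = c₁) ∧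
    ((∀ x ∈ Ioc (0:ℝ) 1, HasDerivWithinAt y₂ (d₂ x) (Icc (0:ℝ) 1) x) ∧
     (∀ x ∈ Ioo (0:ℝ) 1, HasDerivAt (fun t => t ^ k₂ * d₂ t) (x ^ k₂ * f₂ x (y₁ x) (y₂ x)) x) ∧
     Tendsto d₂ (nhdsWithin 0 (Ioi 0)) (nhds 0) ∧
     a₂ * y₂ 1 + b₂ * d₂ 1 = c₂) := by
  have hforcing : ∀ f : ℝ → ℝ → ℝ → ℝ,
      ContinuousOn (fun q : ℝ × ℝ × ℝ => f q.1 q.2.1 q.2.2) (Icc (0:ℝ) 1 ×ˢ univ) →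
      ContinuousOn (fun s => f s (y₁ s) (y₂ s)) (Icc 0 1) := fun f hf =>
    hf.comp (continuousOn_id.prodMk (hy₁c.prodMk hy₂c)) fun s hs => ⟨hs, mem_univ _⟩
  exact ⟨LaneEmden.of_integral_eq hk₁ hk₁1 (hforcing f₁ hf₁c) ha₁ heq₁,
    LaneEmden.of_integral_eq hk₂ hk₂1 (hforcing f₂ hf₂c) ha₂ heq₂⟩
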